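/- Let μ and ν be Borel probability measures on ℝ with quantile functions Q_μ and Q_ν, both with finite second moments. Then the minimum of ∫ a·b dπ(a,b) over all couplings π of μ and ν equals ∫₀¹ Q_μ(t) Q_ν(1−t) dt, attained by the countermonotonic coupling (Q_μ(ξ), Q_ν(1−ξ)) with ξ uniform on (0,1). -/

import Mathlib

/-!
Hoeffding's identity: since `a = ∫ (1{x < a} - 1{x < 0}) dx`, Fubini writes `∫ a b dπ` as the
integral over `(x, y)` of the joint survival function `π(X > x, Y > y)` plus terms that depend on
the marginals only (the second moments make `a b` integrable, which justifies Fubini). Among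
couplings of `μ` and `ν` the survival function is bounded below by Fréchet's bound
`(1 - F_μ(x) - F_ν(y))⁺`, and the countermonotone coupling `(Q_μ(ξ), Q_ν(1 - ξ))` attains it for
every `(x, y)` because `Q_μ(t) ≤ x ↔ t ≤ F_μ(x)`.
-/

open MeasureTheory Set

/-- Quantile function of a measure on ℝ: `Q_μ(t) = inf {x : μ((-∞,x]) ≥ t}`. -/
noncomputable def quantile (μ : Measure ℝ) (t : ℝ) : ℝ :=
  sInf {x : ℝ | t ≤ (μ (Iic x)).toReal}

/-- A coupling of `μ` and `ν` is a measure on `ℝ × ℝ` with first marginal `μ`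
and second marginal `ν`. -/
def IsCoupling (π : Measure (ℝ × ℝ)) (μ ν : Measure ℝ) : Prop :=
  π.map Prod.fst = μ ∧ π.map Prod.snd = ν

open ProbabilityTheory

section Quantile

variable (μ : Measure ℝ) [IsProbabilityMeasure μ]

lemma quantile_le_iff_le_cdf {t : ℝ} (ht : t ∈ Ioo 0 1) (x : ℝ) :
    quantile μ t ≤ x ↔ t ≤ cdf μ x := by
  set S := {x : ℝ | t ≤ cdf μ x}
  have hq : quantile μ t = sInf S := by simp [quantile, S, cdf_eq_real, measureReal_def]
  have hne : S.Nonempty := ((tendsto_cdf_atTop μ).eventually (eventually_ge_nhds ht.2)).exists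
  have hbdd : BddBelow S := by
    obtain ⟨y, hy⟩ := ((tendsto_cdf_atBot μ).eventually (eventually_lt_nhds ht.1)).exists
    exact ⟨y, fun x hx => le_of_not_gt fun hxy => (hx.trans (monotone_cdf μ hxy.le)).not_gt hy⟩
  -- `S` is an up-set and `cdf μ` is right-continuous, so `S` contains its infimum.
  have hmem : sInf S ∈ S := by
    refine ge_of_tendsto (((cdf μ).right_continuous _).tendsto.mono_left
      (nhdsWithin_mono _ Ioi_subset_Ici_self)) (eventually_nhdsWithin_of_forall fun y hy => ?_)
    obtain ⟨s, hs, hsy⟩ := (csInf_lt_iff hbdd hne).mp hy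
    exact hs.trans (monotone_cdf μ hsy.le)
  rw [hq]
  exact ⟨fun h => hmem.trans (monotone_cdf μ h), fun h => csInf_le hbdd h⟩

lemma lt_quantile_iff_cdf_lt {t : ℝ} (ht : t ∈ Ioo 0 1) (x : ℝ) :
    x < quantile μ t ↔ cdf μ x < t :=
  lt_iff_lt_of_le_iff_le (quantile_le_iff_le_cdf μ ht x)

lemma monotoneOn_quantile : MonotoneOn (quantile μ) (Ioo 0 1) := fun _ ht _ hs hts =>
  (quantile_le_iff_le_cdf μ ht _).mpr (hts.trans ((quantile_le_iff_le_cdf μ hs _).mp le_rfl))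

lemma aemeasurable_quantile : AEMeasurable (quantile μ) (volume.restrict (Ioo 0 1)) :=
  aemeasurable_restrict_of_monotoneOn measurableSet_Ioo (monotoneOn_quantile μ)

instance : IsProbabilityMeasure (volume.restrict (Ioo (0 : ℝ) 1)) := ⟨by simp⟩

lemma map_quantile_volume_Ioo : (volume.restrict (Ioo 0 1)).map (quantile μ) = μ := by
  have : IsProbabilityMeasure ((volume.restrict (Ioo (0:ℝ) 1)).map (quantile μ)) :=
    Measure.isProbabilityMeasure_map (aemeasurable_quantile μ)
  refine Measure.ext_of_Iic _ _ fun x => ?_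
  have hpre : quantile μ ⁻¹' Iic x ∩ Ioo 0 1 = Ioo 0 1 ∩ Iic (cdf μ x) := by
    ext t
    simp only [mem_inter_iff, mem_preimage, mem_Iic]
    exact ⟨fun h => ⟨h.2, (quantile_le_iff_le_cdf μ h.2 x).mp h.1⟩,
      fun h => ⟨(quantile_le_iff_le_cdf μ h.1 x).mpr h.2, h.1⟩⟩
  rw [Measure.map_apply_of_aemeasurable (aemeasurable_quantile μ) measurableSet_Iic,
    Measure.restrict_apply' measurableSet_Ioo, hpre,
    measure_congr ((Ioo_ae_eq_Ioc (μ := volume)).inter (ae_eq_refl (Iic (cdf μ x)))),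
    Ioc_inter_Iic, Real.volume_Ioc, min_eq_right (cdf_le_one μ x), sub_zero, ofReal_cdf]

end Quantile

lemma measurePreserving_one_sub_volume_Ioo :
    MeasurePreserving (fun t : ℝ => 1 - t) (volume.restrict (Ioo 0 1))
      (volume.restrict (Ioo 0 1)) := by
  have h := (Measure.measurePreserving_sub_left volume (1 : ℝ)).restrict_preimage
    (measurableSet_Ioo (a := (0 : ℝ)) (b := 1))
  have hpre : (fun t : ℝ => 1 - t) ⁻¹' Ioo 0 1 = Ioo 0 1 := by
    ext t
    exact sub_mem_Ioo_zero_iff_right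
  rwa [hpre] at h

section Countermonotone

variable (μ ν : Measure ℝ) [IsProbabilityMeasure μ] [IsProbabilityMeasure ν]

lemma map_quantile_one_sub_volume_Ioo :
    (volume.restrict (Ioo 0 1)).map (fun t => quantile ν (1 - t)) = ν := by
  have h := measurePreserving_one_sub_volume_Ioo
  change (volume.restrict (Ioo 0 1)).map (quantile ν ∘ fun t => 1 - t) = ν
  rw [← AEMeasurable.map_map_of_aemeasurable (by rw [h.map_eq]; exact aemeasurable_quantile ν)
    h.aemeasurable, h.map_eq, map_quantile_volume_Ioo]

noncomputable def countermonotoneCoupling : Measure (ℝ × ℝ) :=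
  (volume.restrict (Ioo 0 1)).map fun t => (quantile μ t, quantile ν (1 - t))

lemma aemeasurable_quantile_prod_quantile_one_sub :
    AEMeasurable (fun t => (quantile μ t, quantile ν (1 - t))) (volume.restrict (Ioo 0 1)) :=
  (aemeasurable_quantile μ).prodMk <| (aemeasurable_quantile ν).comp_quasiMeasurePreserving
    measurePreserving_one_sub_volume_Ioo.quasiMeasurePreserving

lemma isCoupling_countermonotoneCoupling : IsCoupling (countermonotoneCoupling μ ν) μ ν := by
  have h := aemeasurable_quantile_prod_quantile_one_sub μ ν
  exact ⟨(AEMeasurable.map_map_of_aemeasurable measurable_fst.aemeasurable h).trans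
      (map_quantile_volume_Ioo μ),
    (AEMeasurable.map_map_of_aemeasurable measurable_snd.aemeasurable h).trans
      (map_quantile_one_sub_volume_Ioo ν)⟩

lemma integral_mul_countermonotoneCoupling :
    ∫ p, p.1 * p.2 ∂countermonotoneCoupling μ ν
      = ∫ t in Ioo 0 1, quantile μ t * quantile ν (1 - t) :=
  integral_map (aemeasurable_quantile_prod_quantile_one_sub μ ν) (by fun_prop)

lemma measureReal_countermonotoneCoupling_Ioi_prod_Ioi (x y : ℝ) :
    (countermonotoneCoupling μ ν).real (Ioi x ×ˢ Ioi y) = max (1 - cdf μ x - cdf ν y) 0 := by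
  have hpre : (fun t => (quantile μ t, quantile ν (1 - t))) ⁻¹' (Ioi x ×ˢ Ioi y) ∩ Ioo 0 1
      = Ioo (cdf μ x) (1 - cdf ν y) := by
    ext t
    simp only [mem_inter_iff, mem_preimage, mem_prod, mem_Ioi]
    constructor
    · rintro ⟨⟨hx, hy⟩, ht⟩
      rw [lt_quantile_iff_cdf_lt μ ht] at hx
      rw [lt_quantile_iff_cdf_lt ν (sub_mem_Ioo_zero_iff_right.2 ht)] at hy
      exact ⟨hx, by linarith⟩
    · rintro ⟨hx, hy⟩
      have ht : t ∈ Ioo 0 1 := ⟨(cdf_nonneg μ x).trans_lt hx, by linarith [cdf_nonneg ν y]⟩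
      rw [lt_quantile_iff_cdf_lt μ ht, lt_quantile_iff_cdf_lt ν (sub_mem_Ioo_zero_iff_right.2 ht)]
      exact ⟨⟨hx, by linarith⟩, ht⟩
  rw [countermonotoneCoupling, map_measureReal_apply_of_aemeasurable
      (aemeasurable_quantile_prod_quantile_one_sub μ ν) (measurableSet_Ioi.prod measurableSet_Ioi),
    measureReal_restrict_apply' measurableSet_Ioo, hpre, Real.volume_real_Ioo]
  ring_nf

end Countermonotone

noncomputable def signedIndicator (a : ℝ) : ℝ → ℝ := (Ico 0 a).indicator 1 - (Ico a 0).indicator 1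

lemma signedIndicator_apply (a x : ℝ) :
    signedIndicator a x = (if x < a then 1 else 0) - if x < 0 then 1 else 0 := by
  simp only [signedIndicator, Pi.sub_apply, indicator_apply, mem_Ico, Pi.one_apply]
  split_ifs <;> grind

lemma abs_signedIndicator (a x : ℝ) :
    |signedIndicator a x| = (Ico 0 a).indicator 1 x + (Ico a 0).indicator 1 x := by
  simp only [signedIndicator, Pi.sub_apply, indicator_apply, mem_Ico, Pi.one_apply]
  split_ifs <;> grind

lemma measurable_signedIndicator_uncurry :
    Measurable fun q : ℝ × ℝ => signedIndicator q.1 q.2 := by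
  simp_rw [signedIndicator_apply]
  exact (Measurable.ite (measurableSet_lt measurable_snd measurable_fst) measurable_const
    measurable_const).sub
      (Measurable.ite (measurableSet_lt measurable_snd measurable_const) measurable_const
        measurable_const)

lemma integrable_indicator_Ico_one (a b : ℝ) : Integrable ((Ico a b).indicator (1 : ℝ → ℝ)) :=
  (integrableOn_const (by simp)).integrable_indicator measurableSet_Ico

lemma integrable_signedIndicator (a : ℝ) : Integrable (signedIndicator a) :=
  (integrable_indicator_Ico_one 0 a).sub (integrable_indicator_Ico_one a 0)

lemma integral_signedIndicator (a : ℝ) : ∫ x, signedIndicator a x = a := by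
  rw [signedIndicator, integral_sub' (integrable_indicator_Ico_one 0 a)
    (integrable_indicator_Ico_one a 0), integral_indicator_one measurableSet_Ico,
    integral_indicator_one measurableSet_Ico, Real.volume_real_Ico, Real.volume_real_Ico,
    sub_zero, zero_sub, max_zero_sub_max_neg_zero_eq_self]

lemma integral_abs_signedIndicator (a : ℝ) : ∫ x, |signedIndicator a x| = |a| := by
  simp_rw [abs_signedIndicator]
  rw [integral_add (integrable_indicator_Ico_one 0 a) (integrable_indicator_Ico_one a 0),
    integral_indicator_one measurableSet_Ico,
    integral_indicator_one measurableSet_Ico, Real.volume_real_Ico, Real.volume_real_Ico,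
    sub_zero, zero_sub, max_zero_add_max_neg_zero_eq_abs_self]

lemma integral_signedIndicator_mul_signedIndicator (a b : ℝ) :
    ∫ z : ℝ × ℝ, signedIndicator a z.1 * signedIndicator b z.2 ∂(volume.prod volume) = a * b := by
  rw [integral_prod_mul (signedIndicator a) (signedIndicator b), integral_signedIndicator,
    integral_signedIndicator]

section Hoeffding

variable {π : Measure (ℝ × ℝ)}

lemma integrable_signedIndicator_mul_signedIndicator [SFinite π]
    (hπ : Integrable (fun p : ℝ × ℝ => p.1 * p.2) π) :
    Integrable (fun w : (ℝ × ℝ) × (ℝ × ℝ) =>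
      signedIndicator w.1.1 w.2.1 * signedIndicator w.1.2 w.2.2)
      (π.prod (volume.prod volume)) := by
  refine (integrable_prod_iff ?_).2 ⟨.of_forall fun p => ?_, ?_⟩
  · exact ((measurable_signedIndicator_uncurry.comp
      (measurable_fst.fst.prodMk measurable_snd.fst)).mul (measurable_signedIndicator_uncurry.comp
        (measurable_fst.snd.prodMk measurable_snd.snd))).aestronglyMeasurable
  · exact (integrable_signedIndicator p.1).mul_prod (integrable_signedIndicator p.2)
  · simp only [norm_mul, Real.norm_eq_abs]
    refine hπ.abs.congr (.of_forall fun p => ?_)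
    dsimp only
    rw [integral_prod_mul (fun x => |signedIndicator p.1 x|) (fun y => |signedIndicator p.2 y|),
      integral_abs_signedIndicator, integral_abs_signedIndicator, abs_mul]

lemma integral_mul_eq_integral_integral_signedIndicator [SFinite π]
    (hπ : Integrable (fun p : ℝ × ℝ => p.1 * p.2) π) :
    ∫ p, p.1 * p.2 ∂π = ∫ z : ℝ × ℝ, ∫ p, signedIndicator p.1 z.1 * signedIndicator p.2 z.2 ∂π
      ∂(volume.prod volume) := by
  calc ∫ p, p.1 * p.2 ∂π
      = ∫ p, ∫ z : ℝ × ℝ, signedIndicator p.1 z.1 * signedIndicator p.2 z.2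
          ∂(volume.prod volume) ∂π :=
        integral_congr_ae (.of_forall fun p =>
          (integral_signedIndicator_mul_signedIndicator _ _).symm)
    _ = _ := integral_integral_swap (integrable_signedIndicator_mul_signedIndicator hπ)

end Hoeffding

namespace IsCoupling

variable {π : Measure (ℝ × ℝ)} {μ ν : Measure ℝ}

lemma isProbabilityMeasure [IsProbabilityMeasure μ] (hπ : IsCoupling π μ ν) :
    IsProbabilityMeasure π := by
  have h := Measure.map_apply (μ := π) measurable_fst MeasurableSet.univ
  rw [hπ.1, preimage_univ, measure_univ] at h
  exact ⟨h.symm⟩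

lemma integrable_mul (hπ : IsCoupling π μ ν) (hμ : MemLp id 2 μ)
    (hν : MemLp id 2 ν) : Integrable (fun p : ℝ × ℝ => p.1 * p.2) π := by
  have hfst : MemLp Prod.fst 2 π := by
    rw [← hπ.1] at hμ
    exact (memLp_map_measure_iff hμ.1 measurable_fst.aemeasurable).mp hμ
  have hsnd : MemLp Prod.snd 2 π := by
    rw [← hπ.2] at hν
    exact (memLp_map_measure_iff hν.1 measurable_snd.aemeasurable).mp hν
  exact hfst.integrable_mul hsnd

lemma one_sub_cdf_sub_cdf_le [IsProbabilityMeasure μ] (hπ : IsCoupling π μ ν) (x y : ℝ) :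
    1 - cdf μ x - cdf ν y ≤ π.real (Ioi x ×ˢ Ioi y) := by
  have := hπ.isProbabilityMeasure
  have hν : IsProbabilityMeasure ν :=
    hπ.2 ▸ Measure.isProbabilityMeasure_map measurable_snd.aemeasurable
  have hsub : Prod.fst ⁻¹' Ioi x ⊆ Ioi x ×ˢ Ioi y ∪ Prod.snd ⁻¹' Iic y := by
    rintro ⟨a, b⟩ ha
    rcases le_or_gt b y with hb | hb
    · exact Or.inr hb
    · exact Or.inl ⟨ha, hb⟩
  have hx : μ.real (Ioi x) = 1 - cdf μ x := by
    rw [← compl_Iic, probReal_compl_eq_one_sub measurableSet_Iic, cdf_eq_real]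
  have h := (measureReal_mono (μ := π) hsub).trans (measureReal_union_le _ _)
  rw [← map_measureReal_apply measurable_fst measurableSet_Ioi,
    ← map_measureReal_apply measurable_snd measurableSet_Iic, hπ.1, hπ.2, hx, ← cdf_eq_real] at h
  linarith

lemma integral_signedIndicator_mul [IsProbabilityMeasure μ] (hπ : IsCoupling π μ ν) (x y : ℝ) :
    ∫ p, signedIndicator p.1 x * signedIndicator p.2 y ∂π
      = π.real (Ioi x ×ˢ Ioi y) - (if y < 0 then 1 else 0) * μ.real (Ioi x)
        - (if x < 0 then 1 else 0) * ν.real (Ioi y)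
        + (if x < 0 then 1 else 0) * (if y < 0 then 1 else 0) := by
  have := hπ.isProbabilityMeasure
  set c : ℝ := if x < 0 then 1 else 0
  set d : ℝ := if y < 0 then 1 else 0
  have hpt : ∀ p : ℝ × ℝ, signedIndicator p.1 x * signedIndicator p.2 y
      = (Ioi x ×ˢ Ioi y).indicator 1 p - d * (Prod.fst ⁻¹' Ioi x).indicator 1 p
        - c * (Prod.snd ⁻¹' Ioi y).indicator 1 p + c * d := by
    intro p
    simp only [signedIndicator_apply, indicator, mem_prod, mem_preimage, mem_Ioi,
      Pi.one_apply, c, d]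
    split_ifs <;> grind
  have hT : MeasurableSet (Ioi x ×ˢ Ioi y) := measurableSet_Ioi.prod measurableSet_Ioi
  have hA : MeasurableSet (Prod.fst ⁻¹' Ioi x : Set (ℝ × ℝ)) := measurable_fst measurableSet_Ioi
  have hB : MeasurableSet (Prod.snd ⁻¹' Ioi y : Set (ℝ × ℝ)) := measurable_snd measurableSet_Ioi
  have := (integrable_const (1 : ℝ)).indicator (μ := π) hT
  have := (integrable_const (1 : ℝ)).indicator (μ := π) hA
  have := (integrable_const (1 : ℝ)).indicator (μ := π) hB
  simp_rw [hpt]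
  rw [integral_add (by fun_prop) (by fun_prop), integral_sub (by fun_prop) (by fun_prop),
    integral_sub (by fun_prop) (by fun_prop), integral_const_mul, integral_const_mul,
    integral_indicator_one hT, integral_indicator_one hA, integral_indicator_one hB, integral_const, probReal_univ, one_smul,
    ← map_measureReal_apply measurable_fst measurableSet_Ioi,
    ← map_measureReal_apply measurable_snd measurableSet_Ioi, hπ.1, hπ.2]

lemma integral_mul_countermonotoneCoupling_le [IsProbabilityMeasure μ] [IsProbabilityMeasure ν]
    (hμ : MemLp id 2 μ) (hν : MemLp id 2 ν) (hπ : IsCoupling π μ ν) :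
    ∫ p, p.1 * p.2 ∂countermonotoneCoupling μ ν ≤ ∫ p, p.1 * p.2 ∂π := by
  have h₀ := isCoupling_countermonotoneCoupling μ ν
  have := hπ.isProbabilityMeasure
  have := h₀.isProbabilityMeasure
  have hint := hπ.integrable_mul hμ hν
  have hint₀ := h₀.integrable_mul hμ hν
  rw [integral_mul_eq_integral_integral_signedIndicator hint,
    integral_mul_eq_integral_integral_signedIndicator hint₀]
  refine integral_mono (integrable_signedIndicator_mul_signedIndicator hint₀).integral_prod_right
    (integrable_signedIndicator_mul_signedIndicator hint).integral_prod_right fun z => ?_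
  rw [h₀.integral_signedIndicator_mul, hπ.integral_signedIndicator_mul,
    measureReal_countermonotoneCoupling_Ioi_prod_Ioi]
  linarith [max_le (hπ.one_sub_cdf_sub_cdf_le z.1 z.2) measureReal_nonneg]

end IsCoupling

/-- Lower Hoeffding–Fréchet bound: the minimum of `∫ a·b dπ` over couplings of `μ`
and `ν` equals `∫₀¹ Q_μ(t) Q_ν(1−t) dt`, attained by the countermonotonic coupling. -/
theorem stmt1 (μ ν : Measure ℝ) [IsProbabilityMeasure μ] [IsProbabilityMeasure ν]
    (hμ2 : MemLp id 2 μ) (hν2 : MemLp id 2 ν) :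
    IsLeast ((fun π : Measure (ℝ × ℝ) => ∫ p, p.1 * p.2 ∂π) '' {π | IsCoupling π μ ν})
      (∫ t in Ioo (0:ℝ) 1, quantile μ t * quantile ν (1 - t)) ∧
    IsCoupling ((volume.restrict (Ioo (0:ℝ) 1)).map
      (fun t => (quantile μ t, quantile ν (1 - t)))) μ ν ∧
    (∫ p, p.1 * p.2
        ∂((volume.restrict (Ioo (0:ℝ) 1)).map
          (fun t => (quantile μ t, quantile ν (1 - t)))))
      = ∫ t in Ioo (0:ℝ) 1, quantile μ t * quantile ν (1 - t) := by
  have hcoupling := isCoupling_countermonotoneCoupling μ ν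
  have hintegral := integral_mul_countermonotoneCoupling μ ν
  refine ⟨⟨⟨_, hcoupling, hintegral⟩, ?_⟩, hcoupling, hintegral⟩
  rintro _ ⟨π, hπ, rfl⟩
  exact hintegral ▸ hπ.integral_mul_countermonotoneCoupling_le hμ2 hν2
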